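/- For spaces F and B and a fibration F → E → B, the Lusternik–Schnirelmann category satisfies cat(E) + 1 ≤ (cat(F) + 1)·(cat(B) + 1). -/

import Mathlib

/- STATEMENT 3 (Varadarajan, Hardie): for a (Hurewicz) fibration F → E → B,
cat(E) + 1 ≤ (cat(F)+1)·(cat(B)+1), where cat is the Lusternik–Schnirelmann category:
the least m such that the space admits an open cover by m+1 sets each contractible in it. -/

open unitInterval

/-- A subset `U` of `X` is contractible in `X`: the inclusion is null-homotopic. -/
def ContractibleInSpace {X : Type} [TopologicalSpace X] (U : Set X) : Prop :=
  ∃ x₀ : X, (ContinuousMap.mk (Subtype.val : U → X)).Homotopic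
    (ContinuousMap.const U x₀)

/-- `LSCatLE X m`: `X` is covered by `m+1` open subsets, each contractible in `X`. -/
def LSCatLE (X : Type) [TopologicalSpace X] (m : ℕ) : Prop :=
  ∃ U : Fin (m + 1) → Set X, (∀ i, IsOpen (U i)) ∧ (⋃ i, U i) = Set.univ ∧
    ∀ i, ContractibleInSpace (U i)

/-- The Lusternik–Schnirelmann category of `X`, as an extended natural number. -/
noncomputable def LSCat (X : Type) [TopologicalSpace X] : ℕ∞ :=
  sInf {n : ℕ∞ | ∃ m : ℕ, n = m ∧ LSCatLE X m}

/-- `p : E → B` is a (Hurewicz) fibration: it has the homotopy lifting property with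
respect to all spaces. -/
def IsHurewiczFibration {E B : Type} [TopologicalSpace E] [TopologicalSpace B]
    (p : C(E, B)) : Prop :=
  ∀ (Y : Type) (_ : TopologicalSpace Y) (f : C(Y, E)) (H : C(Y × I, B)),
    (∀ y, H (y, 0) = p (f y)) →
      ∃ H' : C(Y × I, E), (∀ z, p (H' z) = H z) ∧ ∀ y, H' (y, 0) = f y

/-!
Cover `B` by open sets `U₀, …, Uₘ`, each contractible in `B`. Since `B` is path connected, the
contraction of `Uᵢ` can be taken to end at `b`; lifting it to `E` deforms `p⁻¹(Uᵢ)` inside `E` into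
the fibre over `b`, ending in a map `gᵢ`. If `V₀, …, Vₙ` is a categorical cover of the fibre, the
`(n+1)(m+1)` open sets `gᵢ⁻¹(Vₖ)` cover `E`, and each is contractible in `E` because its inclusion
is homotopic to a map that factors through the inclusion of `Vₖ`.
-/

open ContinuousMap

lemma ContinuousMap.Nullhomotopic.homotopic_const {X Y : Type} [TopologicalSpace X]
    [TopologicalSpace Y] [PathConnectedSpace Y] {f : C(X, Y)} (hf : f.Nullhomotopic) (y : Y) :
    f.Homotopic (const X y) :=
  let ⟨y₀, h⟩ := hf
  h.trans ⟨(PathConnectedSpace.somePath y₀ y).toHomotopyConst⟩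

lemma ContractibleInSpace.nullhomotopic {X : Type} [TopologicalSpace X] {U : Set X}
    (hU : ContractibleInSpace U) : (ContinuousMap.mk (Subtype.val : U → X)).Nullhomotopic :=
  hU

lemma IsHurewiczFibration.exists_homotopic_into_fiber {E B : Type} [TopologicalSpace E]
    [TopologicalSpace B] {p : C(E, B)} (hp : IsHurewiczFibration p) {A : Type}
    [TopologicalSpace A] (f : C(A, E)) {b : B} (h : (p.comp f).Homotopic (const A b)) :
    ∃ g : C(A, {e : E // p e = b}), f.Homotopic ((ContinuousMap.mk Subtype.val).comp g) := by
  obtain ⟨M⟩ := h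
  obtain ⟨H, hpH, hH₀⟩ := hp A inferInstance f (M.toContinuousMap.comp prodSwap) M.apply_zero
  have hH₁ (a : A) : p (H (a, 1)) = b := (hpH (a, 1)).trans (M.apply_one a)
  exact ⟨⟨fun a => ⟨H (a, 1), hH₁ a⟩, by fun_prop⟩, ⟨⟨H.comp prodSwap, hH₀, fun _ => rfl⟩⟩⟩

lemma IsHurewiczFibration.exists_homotopic_preimage_into_fiber {E B : Type}
    [TopologicalSpace E] [TopologicalSpace B] [PathConnectedSpace B] {p : C(E, B)}
    (hp : IsHurewiczFibration p) (b : B) {U : Set B} (hU : ContractibleInSpace U) :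
    ∃ g : C(p ⁻¹' U, {e : E // p e = b}),
      (ContinuousMap.mk (Subtype.val : p ⁻¹' U → E)).Homotopic
        ((ContinuousMap.mk Subtype.val).comp g) := by
  let restrict : C(p ⁻¹' U, U) := ⟨fun e => ⟨p e, e.2⟩, by fun_prop⟩
  exact hp.exists_homotopic_into_fiber _ ((hU.nullhomotopic.comp_left restrict).homotopic_const b)

lemma ContractibleInSpace.image_preimage {X F : Type} [TopologicalSpace X] [TopologicalSpace F]
    {U : Set X} {j : C(F, X)} {g : C(U, F)}
    (hg : (ContinuousMap.mk (Subtype.val : U → X)).Homotopic (j.comp g)) {V : Set F}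
    (hV : ContractibleInSpace V) : ContractibleInSpace (Subtype.val '' (g ⁻¹' V)) := by
  set W := Subtype.val '' (g ⁻¹' V)
  have hWU (w : W) : w.1 ∈ U := by obtain ⟨_, a, -, rfl⟩ := w; exact a.2
  let r : C(W, U) := ⟨fun w => ⟨w, hWU w⟩, by fun_prop⟩
  have hgr (w : W) : g (r w) ∈ V := by obtain ⟨_, a, ha, rfl⟩ := w; exact ha
  let q : C(W, V) := ⟨fun w => ⟨g (r w), hgr w⟩, by fun_prop⟩
  obtain ⟨x, hx⟩ := (hV.nullhomotopic.comp_right j).comp_left q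
  exact ⟨x, (hg.comp (.refl r)).trans hx⟩

lemma LSCatLE.of_fintype_cover {X ι : Type} [TopologicalSpace X] [Fintype ι] {m : ℕ}
    (hι : Fintype.card ι = m + 1) (U : ι → Set X) (hU : ∀ i, IsOpen (U i))
    (hcov : ⋃ i, U i = Set.univ) (hcon : ∀ i, ContractibleInSpace (U i)) : LSCatLE X m :=
  let e := Fintype.equivFinOfCardEq hι
  ⟨fun k => U (e.symm k), fun _ => hU _, by rw [e.symm.surjective.iUnion_comp U, hcov],
    fun _ => hcon _⟩

lemma LSCatLE.of_open_cover_deforming_into {X F : Type} [TopologicalSpace X]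
    [TopologicalSpace F] {m n : ℕ}
    (hF : LSCatLE F n) (U : Fin (m + 1) → Set X) (hU : ∀ i, IsOpen (U i))
    (hcov : ⋃ i, U i = Set.univ) (j : C(F, X)) (g : ∀ i, C(U i, F))
    (hg : ∀ i, (ContinuousMap.mk (Subtype.val : U i → X)).Homotopic (j.comp (g i))) :
    LSCatLE X (n * m + n + m) := by
  obtain ⟨V, hV, hVcov, hVcon⟩ := hF
  refine .of_fintype_cover (ι := Fin (n + 1) × Fin (m + 1))
    (by simp only [Fintype.card_prod, Fintype.card_fin]; ring)
    (fun ki => Subtype.val '' (g ki.2 ⁻¹' V ki.1))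
    (fun ki => (hU ki.2).isOpenMap_subtype_val _ ((hV ki.1).preimage (g ki.2).continuous))
    ?_ (fun ki => (hVcon ki.1).image_preimage (hg ki.2))
  refine Set.eq_univ_of_forall fun x => ?_
  obtain ⟨i, hi⟩ := Set.mem_iUnion.mp (hcov ▸ Set.mem_univ x)
  obtain ⟨k, hk⟩ := Set.mem_iUnion.mp (hVcov ▸ Set.mem_univ (g i ⟨x, hi⟩))
  exact Set.mem_iUnion.mpr ⟨(k, i), ⟨x, hi⟩, hk, rfl⟩

lemma LSCatLE.lsCat_le {X : Type} [TopologicalSpace X] {m : ℕ} (h : LSCatLE X m) :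
    LSCat X ≤ m :=
  sInf_le ⟨m, rfl, h⟩

lemma exists_lsCatLE_of_lsCat_ne_top {X : Type} [TopologicalSpace X] (h : LSCat X ≠ ⊤) :
    ∃ m : ℕ, LSCat X = m ∧ LSCatLE X m := by
  have hne : {n : ℕ∞ | ∃ m : ℕ, n = m ∧ LSCatLE X m}.Nonempty :=
    Set.nonempty_iff_ne_empty.mpr fun hempty => h (by rw [LSCat, hempty, sInf_empty])
  exact csInf_mem hne

theorem stmt3_general {E B : Type} [TopologicalSpace E] [TopologicalSpace B]
    [PathConnectedSpace B] (p : C(E, B)) (hp : IsHurewiczFibration p)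
    (b : B) (F : Type) [TopologicalSpace F]
    (hF : Nonempty (F ≃ₜ {e : E // p e = b})) :
    LSCat E + 1 ≤ (LSCat F + 1) * (LSCat B + 1) := by
  obtain ⟨φ⟩ := hF
  by_cases hFtop : LSCat F = ⊤
  · simp [hFtop]
  by_cases hBtop : LSCat B = ⊤
  · simp [hBtop]
  obtain ⟨n, hn, hFn⟩ := exists_lsCatLE_of_lsCat_ne_top hFtop
  obtain ⟨m, hm, U, hU, hcov, hcon⟩ := exists_lsCatLE_of_lsCat_ne_top hBtop
  choose g hg using fun i => hp.exists_homotopic_preimage_into_fiber b (hcon i)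
  have hE : LSCatLE E (n * m + n + m) :=
    hFn.of_open_cover_deforming_into (fun i => p ⁻¹' U i) (fun i => (hU i).preimage p.continuous)
      (by rw [← Set.preimage_iUnion, hcov, Set.preimage_univ])
      ((ContinuousMap.mk Subtype.val).comp (φ : C(F, {e : E // p e = b})))
      (fun i => (φ.symm : C({e : E // p e = b}, F)).comp (g i))
      (fun i => by convert hg i using 1; ext; simp)
  calc LSCat E + 1 ≤ ((n * m + n + m : ℕ) : ℕ∞) + 1 := by gcongr; exact hE.lsCat_le
    _ = (LSCat F + 1) * (LSCat B + 1) := by rw [hn, hm]; push_cast; ring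

theorem stmt3 {E B : Type} [TopologicalSpace E] [TopologicalSpace B]
    [PathConnectedSpace B] (p : C(E, B)) (hp : IsHurewiczFibration p)
    (hsurj : Function.Surjective p) (b : B) (F : Type) [TopologicalSpace F]
    (hF : Nonempty (F ≃ₜ {e : E // p e = b})) :
    LSCat E + 1 ≤ (LSCat F + 1) * (LSCat B + 1) :=
  stmt3_general p hp b F hF
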